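/- arXiv:math/0209180 — 4 statements merged into one kernel-verified Lean document; each statement's English description precedes it below -/
import Mathlib

section
/- Let H be a Hopf algebra with coproduct Δ, counit ε, antipode S, and let F ∈ H ⊗ H be an invertible twist such that Δ_h(g) := F Δ(g) F⁻¹ admits an antipode S_h (with the same counit ε). Write F = Σ F₁ ⊗ F₂ and F⁻¹ = Σ F₁' ⊗ F₂'. Then σ₁ := Σ S_h(F₁)F₂ satisfies S_h(g) σ₁ = σ₁ S(g) for all g ∈ H. -/
open scoped TensorProduct

open LinearMap TensorProduct Coalgebra HopfAlgebra

set_option maxHeartbeats 1000000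
set_option synthInstance.maxHeartbeats 400000

/-- For a Hopf algebra `H` with antipode `S`, an invertible twist `F` with twisted
coproduct `Δ_h(g) = F Δ(g) F⁻¹` admitting an antipode `S_h` (same counit `ε`), the
element `σ₁ := Σ S_h(F₁) F₂` satisfies `S_h(g) σ₁ = σ₁ S(g)` for all `g`. -/
theorem twisted_antipode_sigma
    (R H : Type*) [CommRing R] [Ring H] [HopfAlgebra R H]
    (F : (H ⊗[R] H)ˣ) (Sh : H →ₗ[R] H)
    (hanti : ∀ a b : H, Sh (a * b) = Sh b * Sh a)
    (hleft : ∀ g : H,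
      LinearMap.mul' R H (LinearMap.rTensor H Sh
        (↑F * Coalgebra.comul (R := R) g * ↑F⁻¹))
        = algebraMap R H (Coalgebra.counit (R := R) g))
    (hright : ∀ g : H,
      LinearMap.mul' R H (LinearMap.lTensor H Sh
        (↑F * Coalgebra.comul (R := R) g * ↑F⁻¹))
        = algebraMap R H (Coalgebra.counit (R := R) g)) :
    ∀ g : H,
      Sh g * LinearMap.mul' R H (LinearMap.rTensor H Sh (↑F : H ⊗[R] H))
        = LinearMap.mul' R H (LinearMap.rTensor H Sh (↑F : H ⊗[R] H))
            * HopfAlgebra.antipode (R := R) g := by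
  set m : H ⊗[R] H →ₗ[R] H := LinearMap.mul' R H with hm
  set S : H →ₗ[R] H := HopfAlgebra.antipode (R := R) with hS
  set σ : H := m (LinearMap.rTensor H Sh (↑F : H ⊗[R] H)) with hσ
  have mapp : ∀ a b : H, m (a ⊗ₜ[R] b) = a * b := by
    intro a b; rw [hm]; exact LinearMap.mul'_apply
  -- K z : the map c ⊗ d ↦ (Sh c * z) * d
  set K : H → (H ⊗[R] H →ₗ[R] H) := fun z =>
    m ∘ₗ TensorProduct.map ((LinearMap.mulRight R z) ∘ₗ Sh) LinearMap.id with hK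
  have Kapp : ∀ (z c d : H), K z (c ⊗ₜ[R] d) = Sh c * z * d := by
    intro z c d
    simp [hK, mapp]
  -- basic lemma: T (u * (c ⊗ d)) = Sh c * T u * d
  have C0 : ∀ (u : H ⊗[R] H) (c d : H),
      m (LinearMap.rTensor H Sh (u * c ⊗ₜ[R] d))
        = Sh c * m (LinearMap.rTensor H Sh u) * d := by
    intro u
    induction u using TensorProduct.induction_on with
    | zero => intro c d; simp
    | tmul a b =>
        intro c d
        simp only [Algebra.TensorProduct.tmul_mul_tmul, rTensor_tmul, mapp, hanti]
        noncomm_ring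
    | add x y hx hy =>
        intro c d
        simp only [add_mul, map_add, hx, hy, mul_add]
  -- T (u * w) = K (T u) w
  have C' : ∀ (u w : H ⊗[R] H),
      m (LinearMap.rTensor H Sh (u * w)) = K (m (LinearMap.rTensor H Sh u)) w := by
    intro u w
    induction w using TensorProduct.induction_on with
    | zero => simp
    | tmul c d => rw [C0, Kapp]
    | add x y hx hy => simp only [mul_add, map_add, hx, hy]
  -- K of a central (algebraMap) element
  have Kalg : ∀ (r : R) (w : H ⊗[R] H),
      K (algebraMap R H r) w = r • m (LinearMap.rTensor H Sh w) := by
    intro r w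
    induction w using TensorProduct.induction_on with
    | zero => simp
    | tmul c d =>
        rw [Kapp]
        simp only [rTensor_tmul, mapp]
        rw [show Sh c * algebraMap R H r = r • Sh c by
          rw [Algebra.smul_def, Algebra.commutes], smul_mul_assoc]
    | add x y hx hy => simp only [map_add, hx, hy, smul_add]
  -- the key identity (*): K σ (comul g) = ε g • σ
  have star : ∀ g : H, K σ (Coalgebra.comul (R := R) g)
      = Coalgebra.counit (R := R) g • σ := by
    intro g
    have h1 : (↑F : H ⊗[R] H) * Coalgebra.comul (R := R) g
        = ((↑F : H ⊗[R] H) * Coalgebra.comul (R := R) g * ↑F⁻¹) * ↑F := by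
      rw [mul_assoc, Units.inv_mul, mul_one]
    have h2 := C' ((↑F : H ⊗[R] H) * Coalgebra.comul (R := R) g * ↑F⁻¹) (↑F : H ⊗[R] H)
    rw [← h1] at h2
    calc K σ (Coalgebra.comul (R := R) g)
        = m (LinearMap.rTensor H Sh ((↑F : H ⊗[R] H) * Coalgebra.comul (R := R) g)) :=
          (C' _ _).symm
      _ = K (m (LinearMap.rTensor H Sh
            ((↑F : H ⊗[R] H) * Coalgebra.comul (R := R) g * ↑F⁻¹))) (↑F : H ⊗[R] H) := h2
      _ = K (algebraMap R H (Coalgebra.counit (R := R) g)) (↑F : H ⊗[R] H) := by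
          rw [hm] at *; rw [hleft]
      _ = Coalgebra.counit (R := R) g • σ := Kalg _ _
  -- P : a ⊗ (b ⊗ c) ↦ (Sh a * σ) * (b * S c)
  set P : H ⊗[R] (H ⊗[R] H) →ₗ[R] H :=
    m ∘ₗ TensorProduct.map ((LinearMap.mulRight R σ) ∘ₗ Sh) (m ∘ₗ LinearMap.lTensor H S)
    with hP
  -- P ∘ assoc = m ∘ map (K σ) S
  have claimA : ∀ t : (H ⊗[R] H) ⊗[R] H,
      P ((TensorProduct.assoc R H H H) t) = m (TensorProduct.map (K σ) S t) := by
    intro t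
    induction t using TensorProduct.induction_on with
    | zero => simp
    | tmul x c =>
        induction x using TensorProduct.induction_on with
        | zero => simp only [TensorProduct.zero_tmul, map_zero]
        | tmul a b =>
            simp only [assoc_tmul, hP, LinearMap.comp_apply, map_tmul,
              lTensor_tmul, Kapp, mapp, LinearMap.mulRight_apply, mul_assoc]
        | add x y hx hy =>
            simp only [TensorProduct.add_tmul, map_add, hx, hy]
    | add x y hx hy => simp only [map_add, hx, hy]
  -- route 1 : m (map (K σ) S (rTensor comul w)) = σ * m (map (η ∘ ε) S w)
  have R1 : ∀ w : H ⊗[R] H,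
      m (TensorProduct.map (K σ) S (LinearMap.rTensor H (Coalgebra.comul (R := R)) w))
        = σ * m (TensorProduct.map
            ((Algebra.linearMap R H) ∘ₗ Coalgebra.counit (R := R)) S w) := by
    intro w
    induction w using TensorProduct.induction_on with
    | zero => simp
    | tmul c d =>
        simp only [rTensor_tmul, map_tmul, mapp, star,
          LinearMap.comp_apply, Algebra.linearMap_apply]
        rw [smul_mul_assoc, ← Algebra.smul_def, mul_smul_comm]
    | add x y hx hy => simp only [map_add, hx, hy, mul_add]
  -- m (map (η ∘ ε) S (comul g)) = S g
  have R1' : ∀ g : H,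
      m (TensorProduct.map ((Algebra.linearMap R H) ∘ₗ Coalgebra.counit (R := R)) S
        (Coalgebra.comul (R := R) g)) = S g := by
    intro g
    have hfac : TensorProduct.map ((Algebra.linearMap R H) ∘ₗ Coalgebra.counit (R := R)) S
        = (TensorProduct.map (Algebra.linearMap R H) S)
          ∘ₗ (LinearMap.rTensor H (Coalgebra.counit (R := R) (A := H))) := by
      apply TensorProduct.ext'
      intro x y
      simp
    rw [hfac, LinearMap.comp_apply, Coalgebra.rTensor_counit_comul]
    simp [mapp]
  -- route 2 : P (lTensor comul w) = m (map (mulRight σ ∘ Sh) (η ∘ ε) w)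
  have hantiS : ∀ d : H, m (LinearMap.lTensor H S (Coalgebra.comul (R := R) d))
      = algebraMap R H (Coalgebra.counit (R := R) d) := by
    intro d
    rw [hm, hS]
    exact HopfAlgebra.mul_antipode_lTensor_comul_apply d
  have R2 : ∀ w : H ⊗[R] H,
      P (LinearMap.lTensor H (Coalgebra.comul (R := R)) w)
        = m (TensorProduct.map ((LinearMap.mulRight R σ) ∘ₗ Sh)
            ((Algebra.linearMap R H) ∘ₗ Coalgebra.counit (R := R)) w) := by
    intro w
    induction w using TensorProduct.induction_on with
    | zero => simp
    | tmul c d =>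
        simp only [lTensor_tmul, hP, LinearMap.comp_apply, map_tmul,
          mapp, LinearMap.mulRight_apply, Algebra.linearMap_apply, hantiS]
    | add x y hx hy => simp only [map_add, hx, hy]
  -- m (map (mulRight σ ∘ Sh) (η ∘ ε) (comul g)) = Sh g * σ
  have R2' : ∀ g : H,
      m (TensorProduct.map ((LinearMap.mulRight R σ) ∘ₗ Sh)
          ((Algebra.linearMap R H) ∘ₗ Coalgebra.counit (R := R))
          (Coalgebra.comul (R := R) g)) = Sh g * σ := by
    intro g
    have hfac : TensorProduct.map ((LinearMap.mulRight R σ) ∘ₗ Sh)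
          ((Algebra.linearMap R H) ∘ₗ Coalgebra.counit (R := R))
        = (TensorProduct.map ((LinearMap.mulRight R σ) ∘ₗ Sh) (Algebra.linearMap R H))
          ∘ₗ (LinearMap.lTensor H (Coalgebra.counit (R := R) (A := H))) := by
      apply TensorProduct.ext'
      intro x y
      simp
    rw [hfac, LinearMap.comp_apply, Coalgebra.lTensor_counit_comul]
    simp [mapp]
  -- assemble
  intro g
  have coassoc := Coalgebra.coassoc_apply (R := R) (A := H) g
  calc Sh g * σ
      = m (TensorProduct.map ((LinearMap.mulRight R σ) ∘ₗ Sh)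
          ((Algebra.linearMap R H) ∘ₗ Coalgebra.counit (R := R))
          (Coalgebra.comul (R := R) g)) := (R2' g).symm
    _ = P (LinearMap.lTensor H (Coalgebra.comul (R := R)) (Coalgebra.comul (R := R) g)) :=
        (R2 _).symm
    _ = P ((TensorProduct.assoc R H H H)
          (LinearMap.rTensor H (Coalgebra.comul (R := R)) (Coalgebra.comul (R := R) g))) := by
        rw [coassoc]
    _ = m (TensorProduct.map (K σ) S
          (LinearMap.rTensor H (Coalgebra.comul (R := R)) (Coalgebra.comul (R := R) g))) :=
        claimA _
    _ = σ * m (TensorProduct.map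
          ((Algebra.linearMap R H) ∘ₗ Coalgebra.counit (R := R)) S
          (Coalgebra.comul (R := R) g)) := R1 _
    _ = σ * S g := by rw [R1' g]
end

section
/- Let H be a Hopf algebra with coproducts Δ and Δ_h = F Δ F⁻¹ for an invertible F ∈ H ⊗ H, both coassociative. Then the Drinfeld coassociator Φ := (Δ ⊗ id)(F⁻¹)(F⁻¹ ⊗ 1)(1 ⊗ F)(id ⊗ Δ)(F) commutes with (Δ ⊗ id)(Δ(g)) for all g ∈ H. -/
open scoped TensorProduct

set_option maxHeartbeats 1000000

section aux

variable (R H : Type*) [CommRing R] [Ring H] [HopfAlgebra R H]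

noncomputable def myE1 : (H ⊗[R] H) →ₐ[R] H ⊗[R] (H ⊗[R] H) :=
  (Algebra.TensorProduct.assoc R R R H H H).toAlgHom.comp
    (Algebra.TensorProduct.map (Bialgebra.comulAlgHom R H) (AlgHom.id R H))

noncomputable def myE2 : (H ⊗[R] H) →ₐ[R] H ⊗[R] (H ⊗[R] H) :=
  (Algebra.TensorProduct.assoc R R R H H H).toAlgHom.comp Algebra.TensorProduct.includeLeft

noncomputable def myE3 : (H ⊗[R] H) →ₐ[R] H ⊗[R] (H ⊗[R] H) :=
  Algebra.TensorProduct.includeRight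

noncomputable def myE4 : (H ⊗[R] H) →ₐ[R] H ⊗[R] (H ⊗[R] H) :=
  Algebra.TensorProduct.map (AlgHom.id R H) (Bialgebra.comulAlgHom R H)

variable {R H}

lemma myE1_apply (z : H ⊗[R] H) :
    Algebra.TensorProduct.assoc R R R H H H
      (LinearMap.rTensor H (Coalgebra.comul (R := R)) z) = myE1 R H z := by
  induction z using TensorProduct.induction_on with
  | zero => simp
  | tmul x y => simp [myE1]
  | add x y hx hy => simp only [map_add, hx, hy]

lemma myE2_apply (z : H ⊗[R] H) :
    Algebra.TensorProduct.assoc R R R H H H (z ⊗ₜ[R] (1 : H)) = myE2 R H z := by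
  simp [myE2]

lemma myE3_apply (z : H ⊗[R] H) :
    (1 : H) ⊗ₜ[R] z = myE3 R H z := by
  simp [myE3]

lemma myE4_apply (z : H ⊗[R] H) :
    LinearMap.lTensor H (Coalgebra.comul (R := R)) z = myE4 R H z := by
  induction z using TensorProduct.induction_on with
  | zero => simp
  | tmul x y => simp [myE4]
  | add x y hx hy => simp only [map_add, hx, hy]

lemma myE1_comul (g : H) :
    myE1 R H (Coalgebra.comul g) = myE4 R H (Coalgebra.comul g) := by
  rw [← myE1_apply, ← myE4_apply]
  exact Coalgebra.coassoc_apply g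

lemma commute_key {T : Type*} [Ring T] {a b c d X : T}
    (hba : b * a = 1) (hdc : d * c = 1) (h : a * X * b = c * X * d) :
    Commute (b * c) X := by
  show _ = _
  calc b * c * X = b * c * X * 1 := (mul_one _).symm
    _ = b * c * X * (d * c) := by rw [hdc]
    _ = b * (c * X * d) * c := by simp only [mul_assoc]
    _ = b * (a * X * b) * c := by rw [h]
    _ = (b * a) * (X * (b * c)) := by simp only [mul_assoc]
    _ = X * (b * c) := by rw [hba, one_mul]

end aux

/-- If the twisted coproduct `Δ_h = F Δ F⁻¹` is coassociative, then the Drinfeld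
coassociator `Φ = (Δ ⊗ id)(F⁻¹)(F⁻¹ ⊗ 1)(1 ⊗ F)(id ⊗ Δ)(F)` commutes with the
two-fold coproduct `Δ²(g)` for every `g ∈ H`. -/
theorem coassociator_invariant
    (R H : Type*) [CommRing R] [Ring H] [HopfAlgebra R H]
    (F : (H ⊗[R] H)ˣ)
    (hcoass : ∀ g : H,
      Algebra.TensorProduct.assoc R R R H H H
        (LinearMap.rTensor H
          ((LinearMap.mulLeft R ((↑F : H ⊗[R] H))).comp
            ((LinearMap.mulRight R ((↑F⁻¹ : H ⊗[R] H))).comp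
              (Coalgebra.comul (R := R))))
          (↑F * Coalgebra.comul (R := R) g * ↑F⁻¹))
      = LinearMap.lTensor H
          ((LinearMap.mulLeft R ((↑F : H ⊗[R] H))).comp
            ((LinearMap.mulRight R ((↑F⁻¹ : H ⊗[R] H))).comp
              (Coalgebra.comul (R := R))))
          (↑F * Coalgebra.comul (R := R) g * ↑F⁻¹)) :
    ∀ g : H,
      Commute
        (Algebra.TensorProduct.assoc R R R H H H
            (LinearMap.rTensor H (Coalgebra.comul (R := R)) (↑F⁻¹ : H ⊗[R] H))
          * Algebra.TensorProduct.assoc R R R H H H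
              ((↑F⁻¹ : H ⊗[R] H) ⊗ₜ[R] (1 : H))
          * ((1 : H) ⊗ₜ[R] (↑F : H ⊗[R] H))
          * LinearMap.lTensor H (Coalgebra.comul (R := R)) (↑F : H ⊗[R] H))
        (LinearMap.lTensor H (Coalgebra.comul (R := R)) (Coalgebra.comul (R := R) g)) := by
  intro g
  have lhs_lem : ∀ z : H ⊗[R] H,
      Algebra.TensorProduct.assoc R R R H H H
        (LinearMap.rTensor H
          ((LinearMap.mulLeft R ((↑F : H ⊗[R] H))).comp
            ((LinearMap.mulRight R ((↑F⁻¹ : H ⊗[R] H))).comp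
              (Coalgebra.comul (R := R)))) z)
      = myE2 R H ↑F * myE1 R H z * myE2 R H ↑F⁻¹ := by
    intro z
    induction z using TensorProduct.induction_on with
    | zero => simp
    | tmul x y =>
        have h1 : LinearMap.rTensor H
            ((LinearMap.mulLeft R ((↑F : H ⊗[R] H))).comp
              ((LinearMap.mulRight R ((↑F⁻¹ : H ⊗[R] H))).comp
                (Coalgebra.comul (R := R)))) (x ⊗ₜ[R] y)
            = ((↑F : H ⊗[R] H) ⊗ₜ[R] (1 : H)) *
              ((Coalgebra.comul (R := R) x) ⊗ₜ[R] y) *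
              ((↑F⁻¹ : H ⊗[R] H) ⊗ₜ[R] (1 : H)) := by
          simp [LinearMap.rTensor_tmul, Algebra.TensorProduct.tmul_mul_tmul, mul_assoc]
        have h2 : Algebra.TensorProduct.assoc R R R H H H
            ((Coalgebra.comul (R := R) x) ⊗ₜ[R] y) = myE1 R H (x ⊗ₜ[R] y) := by
          simpa [LinearMap.rTensor_tmul] using myE1_apply (R := R) (H := H) (x ⊗ₜ[R] y)
        rw [h1, map_mul, map_mul, h2, myE2_apply, myE2_apply]
    | add x y hx hy =>
        simp only [map_add, mul_add, add_mul] at hx hy ⊢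
        rw [hx, hy]
  have rhs_lem : ∀ z : H ⊗[R] H,
      LinearMap.lTensor H
          ((LinearMap.mulLeft R ((↑F : H ⊗[R] H))).comp
            ((LinearMap.mulRight R ((↑F⁻¹ : H ⊗[R] H))).comp
              (Coalgebra.comul (R := R)))) z
      = myE3 R H ↑F * myE4 R H z * myE3 R H ↑F⁻¹ := by
    intro z
    induction z using TensorProduct.induction_on with
    | zero => simp
    | tmul x y =>
        have h1 : LinearMap.lTensor H
            ((LinearMap.mulLeft R ((↑F : H ⊗[R] H))).comp
              ((LinearMap.mulRight R ((↑F⁻¹ : H ⊗[R] H))).comp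
                (Coalgebra.comul (R := R)))) (x ⊗ₜ[R] y)
            = ((1 : H) ⊗ₜ[R] (↑F : H ⊗[R] H)) *
              (x ⊗ₜ[R] (Coalgebra.comul (R := R) y)) *
              ((1 : H) ⊗ₜ[R] (↑F⁻¹ : H ⊗[R] H)) := by
          simp [LinearMap.lTensor_tmul, Algebra.TensorProduct.tmul_mul_tmul, mul_assoc]
        have h2 : x ⊗ₜ[R] (Coalgebra.comul (R := R) y) = myE4 R H (x ⊗ₜ[R] y) := by
          simpa [LinearMap.lTensor_tmul] using myE4_apply (R := R) (H := H) (x ⊗ₜ[R] y)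
        rw [h1, h2, myE3_apply, myE3_apply]
    | add x y hx hy =>
        simp only [map_add, mul_add, add_mul] at hx hy ⊢
        rw [hx, hy]
  have h := hcoass g
  rw [lhs_lem, rhs_lem] at h
  rw [map_mul, map_mul, map_mul, map_mul, myE1_comul] at h
  set X := myE4 R H (Coalgebra.comul (R := R) g) with hX
  have key : Commute
      ((myE1 R H ↑F⁻¹ * myE2 R H ↑F⁻¹) * (myE3 R H ↑F * myE4 R H ↑F)) X := by
    apply commute_key (a := myE2 R H ↑F * myE1 R H ↑F)
      (d := myE4 R H ↑F⁻¹ * myE3 R H ↑F⁻¹)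
    · calc (myE1 R H ↑F⁻¹ * myE2 R H ↑F⁻¹) * (myE2 R H ↑F * myE1 R H ↑F)
          = myE1 R H ↑F⁻¹ * (myE2 R H (↑F⁻¹ * ↑F)) * myE1 R H ↑F := by
            rw [map_mul]; simp only [mul_assoc]
        _ = 1 := by rw [F.inv_mul, map_one, mul_one, ← map_mul, F.inv_mul, map_one]
    · calc (myE4 R H ↑F⁻¹ * myE3 R H ↑F⁻¹) * (myE3 R H ↑F * myE4 R H ↑F)
          = myE4 R H ↑F⁻¹ * (myE3 R H (↑F⁻¹ * ↑F)) * myE4 R H ↑F := by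
            rw [map_mul]; simp only [mul_assoc]
        _ = 1 := by rw [F.inv_mul, map_one, mul_one, ← map_mul, F.inv_mul, map_one]
    · calc (myE2 R H ↑F * myE1 R H ↑F) * X * (myE1 R H ↑F⁻¹ * myE2 R H ↑F⁻¹)
          = myE2 R H ↑F * (myE1 R H ↑F * X * myE1 R H ↑F⁻¹) * myE2 R H ↑F⁻¹ := by
            simp only [mul_assoc]
        _ = myE3 R H ↑F * (myE4 R H ↑F * X * myE4 R H ↑F⁻¹) * myE3 R H ↑F⁻¹ := h
        _ = (myE3 R H ↑F * myE4 R H ↑F) * X * (myE4 R H ↑F⁻¹ * myE3 R H ↑F⁻¹) := by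
            simp only [mul_assoc]
  have e1f : Algebra.TensorProduct.assoc R R R H H H
      (LinearMap.rTensor H (Coalgebra.comul (R := R)) (↑F⁻¹ : H ⊗[R] H))
      = myE1 R H ↑F⁻¹ := myE1_apply _
  have e2f : Algebra.TensorProduct.assoc R R R H H H ((↑F⁻¹ : H ⊗[R] H) ⊗ₜ[R] (1 : H))
      = myE2 R H ↑F⁻¹ := myE2_apply _
  have e3f : (1 : H) ⊗ₜ[R] (↑F : H ⊗[R] H) = myE3 R H ↑F := myE3_apply _
  have e4f : LinearMap.lTensor H (Coalgebra.comul (R := R)) (↑F : H ⊗[R] H)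
      = myE4 R H ↑F := myE4_apply _
  have xeq : LinearMap.lTensor H (Coalgebra.comul (R := R)) (Coalgebra.comul (R := R) g)
      = X := myE4_apply _
  rw [e1f, e2f, e3f, e4f, xeq, mul_assoc (myE1 R H ↑F⁻¹ * myE2 R H ↑F⁻¹)]
  exact key
end

section
/- Let H be a Hopf algebra acting on an algebra X making X an H-module algebra (g ▷ (xy) = Σ (g_{(1)} ▷ x)(g_{(2)} ▷ y), g ▷ 1 = ε(g)1), and let F ∈ H ⊗ H be invertible. Define x ⋆ y := Σ (F⁻¹₁ ▷ x)(F⁻¹₂ ▷ y). Then for all g ∈ H and x, y ∈ X: g ▷ (x ⋆ y) = Σ (g_{[1]} ▷ x) ⋆ (g_{[2]} ▷ y), where Σ g_{[1]} ⊗ g_{[2]} := F Δ(g) F⁻¹ is the twisted coproduct. -/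
open scoped TensorProduct

/-- Covariance of the twisted star product: if `X` is an `H`-module algebra and
`F ∈ H ⊗ H` is invertible, the star product `x ⋆ y = μ(F⁻¹ ▷ (x ⊗ y))` satisfies
`g ▷ (x ⋆ y) = μ(F⁻¹ ▷ (Δ_F(g) ▷ (x ⊗ y)))`, i.e. it is covariant for the twisted
coproduct `Δ_F(g) = F Δ(g) F⁻¹`. -/
theorem star_product_covariance
    (R H X : Type*) [CommRing R] [Ring H] [HopfAlgebra R H]
    [Ring X] [Algebra R X]
    (act : H →ₗ[R] X →ₗ[R] X)
    (hmulact : ∀ g h : H, act (g * h) = (act g).comp (act h))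
    (honeact : act 1 = LinearMap.id)
    (hunit : ∀ g : H, act g 1 = Coalgebra.counit (R := R) g • (1 : X))
    (hcov : ∀ (g : H) (t : X ⊗[R] X),
      act g (LinearMap.mul' R X t)
        = LinearMap.mul' R X
            (TensorProduct.homTensorHomMap (RingHom.id R) X X X X
              (TensorProduct.map act act (Coalgebra.comul (R := R) g)) t))
    (F : (H ⊗[R] H)ˣ) :
    ∀ (g : H) (x y : X),
      act g (LinearMap.mul' R X
        (TensorProduct.homTensorHomMap (RingHom.id R) X X X X
          (TensorProduct.map act act (↑F⁻¹ : H ⊗[R] H)) (x ⊗ₜ[R] y)))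
      = LinearMap.mul' R X
          (TensorProduct.homTensorHomMap (RingHom.id R) X X X X
            (TensorProduct.map act act (↑F⁻¹ : H ⊗[R] H))
            (TensorProduct.homTensorHomMap (RingHom.id R) X X X X
              (TensorProduct.map act act
                (↑F * Coalgebra.comul (R := R) g * ↑F⁻¹)) (x ⊗ₜ[R] y))) := by

  intro g x y
  set ρ : H ⊗[R] H →ₗ[R] (X ⊗[R] X →ₗ[R] X ⊗[R] X) :=
    (TensorProduct.homTensorHomMap (RingHom.id R) X X X X).comp (TensorProduct.map act act) with hρ
  have hρmul : ∀ a b : H ⊗[R] H, ρ (a * b) = (ρ a).comp (ρ b) := by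
    intro a b
    induction a using TensorProduct.induction_on with
    | zero => simp
    | tmul g1 h1 =>
      induction b using TensorProduct.induction_on with
      | zero => simp
      | tmul g2 h2 =>
        simp only [hρ, LinearMap.comp_apply, Algebra.TensorProduct.tmul_mul_tmul,
          TensorProduct.map_tmul, TensorProduct.homTensorHomMap_apply, hmulact,
          ← TensorProduct.map_comp]
      | add b1 b2 ih1 ih2 =>
        simp only [mul_add, map_add, ih1, ih2, LinearMap.comp_add]
    | add a1 a2 ih1 ih2 =>
      simp only [add_mul, map_add, ih1, ih2, LinearMap.add_comp]
  have key : ∀ (a : H ⊗[R] H) (t : X ⊗[R] X),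
      act g (LinearMap.mul' R X (ρ a t))
        = LinearMap.mul' R X (ρ (Coalgebra.comul (R := R) g * a) t) := by
    intro a t
    rw [hcov g (ρ a t), hρmul]
    rfl
  have hL := key (↑F⁻¹) (x ⊗ₜ[R] y)
  simp only [hρ, LinearMap.comp_apply] at hL
  rw [hL]
  have harg : Coalgebra.comul (R := R) g * (↑F⁻¹ : H ⊗[R] H)
      = (↑F⁻¹ : H ⊗[R] H) * (↑F * Coalgebra.comul (R := R) g * ↑F⁻¹) := by
    rw [← mul_assoc, ← mul_assoc, Units.inv_mul, one_mul]
  rw [harg]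
  have h2 := DFunLike.congr_fun
    (hρmul (↑F⁻¹) (↑F * Coalgebra.comul (R := R) g * ↑F⁻¹)) (x ⊗ₜ[R] y)
  simp only [hρ, LinearMap.comp_apply] at h2
  rw [h2]
end

section
/- In the setting of a Hopf algebra H, an H-module algebra X, and an invertible twist F ∈ H ⊗ H with star product x ⋆ y := Σ (F⁻¹₁ ▷ x)(F⁻¹₂ ▷ y): if the Drinfeld coassociator Φ := (Δ ⊗ id)(F⁻¹)(F⁻¹ ⊗ 1)(1 ⊗ F)(id ⊗ Δ)(F) acts as the identity on X ⊗ X ⊗ X (i.e. Σ (Φ₁ ▷ x)(Φ₂ ▷ y)(Φ₃ ▷ z) = xyz for all x,y,z), then ⋆ is associative. -/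
open scoped TensorProduct

/-- Multiplicativity of a tensor product of representations. -/
lemma tensorHom_mul_aux {R : Type*} [CommRing R]
    {A B V W : Type*} [Ring A] [Algebra R A] [Ring B] [Algebra R B]
    [AddCommGroup V] [Module R V] [AddCommGroup W] [Module R W]
    (ρ : A →ₗ[R] Module.End R V) (σ : B →ₗ[R] Module.End R W)
    (hρ : ∀ a a', ρ (a * a') = ρ a * ρ a')
    (hσ : ∀ b b', σ (b * b') = σ b * σ b')
    (u v : A ⊗[R] B) :
    (TensorProduct.homTensorHomMap (RingHom.id R) V W V W).comp (TensorProduct.map ρ σ) (u * v)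
      = ((TensorProduct.homTensorHomMap (RingHom.id R) V W V W).comp (TensorProduct.map ρ σ) u)
        * ((TensorProduct.homTensorHomMap (RingHom.id R) V W V W).comp (TensorProduct.map ρ σ) v) := by
  induction u using TensorProduct.induction_on with
  | zero => simp
  | tmul a b =>
    induction v using TensorProduct.induction_on with
    | zero => simp
    | tmul c d =>
      simp only [Algebra.TensorProduct.tmul_mul_tmul, LinearMap.comp_apply,
        TensorProduct.map_tmul, TensorProduct.homTensorHomMap_apply, hρ, hσ,
        Module.End.mul_eq_comp, TensorProduct.map_comp]
    | add v₁ v₂ h1 h2 =>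
      simp only [mul_add, map_add, h1, h2, add_mul]
  | add u₁ u₂ h1 h2 =>
    simp only [add_mul, map_add, h1, h2, mul_add]

lemma cancel_aux {M : Type*} [Monoid M] (ab c d d' c' : M)
    (hd : d * d' = 1) (hc : c * c' = 1) : ab * c * d * (d' * c') = ab := by
  rw [mul_assoc (ab * c) d, ← mul_assoc d d' c', hd, one_mul, mul_assoc, hc, mul_one]

set_option maxHeartbeats 1000000 in
/-- If the Drinfeld coassociator `Φ` of an invertible twist `F` acts as the identity on
`X ⊗ X ⊗ X` (i.e. `μ₃(Φ ▷ (x ⊗ y ⊗ z)) = x(yz)`), then the twisted star product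
`x ⋆ y = μ(F⁻¹ ▷ (x ⊗ y))` on the `H`-module algebra `X` is associative. -/
theorem star_product_associative_of_coassociator_trivial
    (R H X : Type*) [CommRing R] [Ring H] [HopfAlgebra R H]
    [Ring X] [Algebra R X]
    (act : H →ₗ[R] X →ₗ[R] X)
    (hmulact : ∀ g h : H, act (g * h) = (act g).comp (act h))
    (honeact : act 1 = LinearMap.id)
    (hunit : ∀ g : H, act g 1 = Coalgebra.counit (R := R) g • (1 : X))
    (hcov : ∀ (g : H) (t : X ⊗[R] X),
      act g (LinearMap.mul' R X t)
        = LinearMap.mul' R X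
            (TensorProduct.homTensorHomMap (RingHom.id R) X X X X
              (TensorProduct.map act act (Coalgebra.comul (R := R) g)) t))
    (F : (H ⊗[R] H)ˣ) :
    let act2 : H ⊗[R] H →ₗ[R] (X ⊗[R] X →ₗ[R] X ⊗[R] X) :=
      (TensorProduct.homTensorHomMap (RingHom.id R) X X X X).comp (TensorProduct.map act act)
    let act3 : H ⊗[R] (H ⊗[R] H) →ₗ[R]
        (X ⊗[R] (X ⊗[R] X) →ₗ[R] X ⊗[R] (X ⊗[R] X)) :=
      (TensorProduct.homTensorHomMap (RingHom.id R) X (X ⊗[R] X) X (X ⊗[R] X)).comp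
        (TensorProduct.map act act2)
    let mul3 : X ⊗[R] (X ⊗[R] X) →ₗ[R] X :=
      (LinearMap.mul' R X).comp (LinearMap.lTensor X (LinearMap.mul' R X))
    let Φ : H ⊗[R] (H ⊗[R] H) :=
      Algebra.TensorProduct.assoc R R R H H H
          (LinearMap.rTensor H (Coalgebra.comul (R := R)) (↑F⁻¹ : H ⊗[R] H))
        * Algebra.TensorProduct.assoc R R R H H H ((↑F⁻¹ : H ⊗[R] H) ⊗ₜ[R] (1 : H))
        * ((1 : H) ⊗ₜ[R] (↑F : H ⊗[R] H))
        * LinearMap.lTensor H (Coalgebra.comul (R := R)) (↑F : H ⊗[R] H)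
    let star : X → X → X := fun x y =>
      LinearMap.mul' R X (act2 (↑F⁻¹ : H ⊗[R] H) (x ⊗ₜ[R] y))
    (∀ x y z : X, mul3 (act3 Φ (x ⊗ₜ[R] (y ⊗ₜ[R] z))) = x * (y * z)) →
    ∀ x y z : X, star (star x y) z = star x (star y z) := by
  intro act2 act3 mul3 Φ star hΦ x y z
  have act2_def : act2 = (TensorProduct.homTensorHomMap (RingHom.id R) X X X X).comp
      (TensorProduct.map act act) := rfl
  have act3_def : act3 = (TensorProduct.homTensorHomMap (RingHom.id R) X (X ⊗[R] X) X (X ⊗[R] X)).comp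
      (TensorProduct.map act act2) := rfl
  have mul3_def : mul3 = (LinearMap.mul' R X).comp
      (LinearMap.lTensor X (LinearMap.mul' R X)) := rfl
  -- multiplicativity of act as an End-valued map
  have hact_mul : ∀ a a' : H, act (a * a') = act a * act a' := by
    intro a a'; rw [hmulact]; rfl
  have act2_mul : ∀ u v : H ⊗[R] H, act2 (u * v) = act2 u * act2 v :=
    tensorHom_mul_aux act act hact_mul hact_mul
  have act3_mul : ∀ u v : H ⊗[R] (H ⊗[R] H), act3 (u * v) = act3 u * act3 v :=
    tensorHom_mul_aux act act2 hact_mul act2_mul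
  -- pure-tensor formulas
  have act2_pure : ∀ (a b : H) (p q : X), act2 (a ⊗ₜ[R] b) (p ⊗ₜ[R] q)
      = act a p ⊗ₜ[R] act b q := by
    intro a b p q
    simp [act2_def, TensorProduct.homTensorHomMap_apply]
  have act3_pure : ∀ (a : H) (w : H ⊗[R] H) (p : X) (t : X ⊗[R] X),
      act3 (a ⊗ₜ[R] w) (p ⊗ₜ[R] t) = act a p ⊗ₜ[R] act2 w t := by
    intro a w p t
    simp [act3_def, TensorProduct.homTensorHomMap_apply]
  have mul3_pure : ∀ (p : X) (t : X ⊗[R] X),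
      mul3 (p ⊗ₜ[R] t) = p * LinearMap.mul' R X t := by
    intro p t
    simp [mul3_def, LinearMap.mul'_apply]
  -- hΦ extended to all tensors
  have hΦ' : ∀ t : X ⊗[R] (X ⊗[R] X), mul3 (act3 Φ t) = mul3 t := by
    intro t
    induction t using TensorProduct.induction_on with
    | zero => simp
    | tmul p s =>
      induction s using TensorProduct.induction_on with
      | zero => simp
      | tmul q r =>
        rw [hΦ p q r, mul3_pure, LinearMap.mul'_apply]
      | add s₁ s₂ h1 h2 =>
        rw [TensorProduct.tmul_add, map_add, map_add, h1, h2, map_add]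
    | add t₁ t₂ h1 h2 =>
      rw [map_add, map_add, h1, h2, map_add]
  -- covariance on the right factor
  have covR : ∀ (w : H ⊗[R] H) (p : X) (u : X ⊗[R] X),
      LinearMap.mul' R X (act2 w (p ⊗ₜ[R] LinearMap.mul' R X u))
        = mul3 (act3 (LinearMap.lTensor H (Coalgebra.comul (R := R)) w) (p ⊗ₜ[R] u)) := by
    intro w p u
    induction w using TensorProduct.induction_on with
    | zero => simp
    | tmul a b =>
      rw [act2_pure, LinearMap.mul'_apply, hcov b u, LinearMap.lTensor_tmul,
        act3_pure, mul3_pure]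
      rfl
    | add w₁ w₂ h1 h2 =>
      simp only [map_add, LinearMap.add_apply, h1, h2]
  -- pulling a right-factor action out as an act3
  have covRight : ∀ (w : H ⊗[R] H) (p : X) (u : X ⊗[R] X),
      p ⊗ₜ[R] act2 w u = act3 ((1 : H) ⊗ₜ[R] w) (p ⊗ₜ[R] u) := by
    intro w p u
    rw [act3_pure, honeact]
    rfl
  -- covariance on the left factor
  have covL : ∀ (w : H ⊗[R] H) (u : X ⊗[R] X) (r : X),
      LinearMap.mul' R X (act2 w ((LinearMap.mul' R X u) ⊗ₜ[R] r))
        = mul3 (act3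
            (Algebra.TensorProduct.assoc R R R H H H
              (LinearMap.rTensor H (Coalgebra.comul (R := R)) w))
            ((TensorProduct.assoc R X X X) (u ⊗ₜ[R] r))) := by
    intro w u r
    induction w using TensorProduct.induction_on with
    | zero => simp
    | tmul a b =>
      rw [act2_pure, LinearMap.mul'_apply, hcov a u, LinearMap.rTensor_tmul]
      -- generalize Δ a
      have key : ∀ (d : H ⊗[R] H),
          LinearMap.mul' R X
              (TensorProduct.homTensorHomMap (RingHom.id R) X X X X
                (TensorProduct.map act act d) u) * act b r
            = mul3 (act3 (Algebra.TensorProduct.assoc R R R H H H (d ⊗ₜ[R] b))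
                ((TensorProduct.assoc R X X X) (u ⊗ₜ[R] r))) := by
        intro d
        induction d using TensorProduct.induction_on with
        | zero => simp
        | tmul c e =>
          induction u using TensorProduct.induction_on with
          | zero => simp
          | tmul p q =>
            rw [Algebra.TensorProduct.assoc_tmul, TensorProduct.assoc_tmul,
              act3_pure, mul3_pure, act2_pure, LinearMap.mul'_apply]
            have : TensorProduct.homTensorHomMap (RingHom.id R) X X X X
                (TensorProduct.map act act (c ⊗ₜ[R] e)) (p ⊗ₜ[R] q)
                = act c p ⊗ₜ[R] act e q := act2_pure c e p q
            rw [this, LinearMap.mul'_apply, mul_assoc]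
          | add u₁ u₂ h1 h2 =>
            simp only [TensorProduct.add_tmul, map_add, add_mul, h1, h2]
        | add d₁ d₂ h1 h2 =>
          simp only [TensorProduct.add_tmul, map_add, LinearMap.add_apply, add_mul, h1, h2]
      exact key _
    | add w₁ w₂ h1 h2 =>
      simp only [map_add, LinearMap.add_apply, h1, h2]
    -- moving an act2 through the associator
  have covAssoc : ∀ (w : H ⊗[R] H),
      (TensorProduct.assoc R X X X) ((act2 w (x ⊗ₜ[R] y)) ⊗ₜ[R] z)
        = act3 (Algebra.TensorProduct.assoc R R R H H H (w ⊗ₜ[R] (1 : H)))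
            (x ⊗ₜ[R] (y ⊗ₜ[R] z)) := by
    intro w
    induction w using TensorProduct.induction_on with
    | zero => simp
    | tmul a b =>
      rw [act2_pure, TensorProduct.assoc_tmul, Algebra.TensorProduct.assoc_tmul,
        act3_pure, act2_pure, honeact]
      rfl
    | add w₁ w₂ h1 h2 =>
      simp only [map_add, LinearMap.add_apply, TensorProduct.add_tmul, h1, h2]
  -- lTensor comul is multiplicative via the algebra-map description
  have hmapφ : ∀ u : H ⊗[R] H,
      LinearMap.lTensor H (Coalgebra.comul (R := R)) u
        = Algebra.TensorProduct.map (AlgHom.id R H) (Bialgebra.comulAlgHom R H) u := by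
    intro u
    induction u using TensorProduct.induction_on with
    | zero => simp
    | tmul a b => simp [Algebra.TensorProduct.map_tmul, Bialgebra.comulAlgHom_apply]
    | add u v h1 h2 => simp only [map_add, h1, h2]
  have hD : LinearMap.lTensor H (Coalgebra.comul (R := R)) (↑F : H ⊗[R] H)
        * LinearMap.lTensor H (Coalgebra.comul (R := R)) (↑F⁻¹ : H ⊗[R] H) = 1 := by
    rw [hmapφ, hmapφ, ← map_mul, Units.mul_inv, map_one]
  have hC : ((1 : H) ⊗ₜ[R] (↑F : H ⊗[R] H)) * ((1 : H) ⊗ₜ[R] (↑F⁻¹ : H ⊗[R] H)) = 1 := by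
    rw [Algebra.TensorProduct.tmul_mul_tmul, one_mul, Units.mul_inv]
    exact Algebra.TensorProduct.one_def.symm
  have hΦdef : Φ = Algebra.TensorProduct.assoc R R R H H H
          (LinearMap.rTensor H (Coalgebra.comul (R := R)) (↑F⁻¹ : H ⊗[R] H))
        * Algebra.TensorProduct.assoc R R R H H H ((↑F⁻¹ : H ⊗[R] H) ⊗ₜ[R] (1 : H))
        * ((1 : H) ⊗ₜ[R] (↑F : H ⊗[R] H))
        * LinearMap.lTensor H (Coalgebra.comul (R := R)) (↑F : H ⊗[R] H) := rfl
  have hfactor : Φ * (LinearMap.lTensor H (Coalgebra.comul (R := R)) (↑F⁻¹ : H ⊗[R] H)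
        * ((1 : H) ⊗ₜ[R] (↑F⁻¹ : H ⊗[R] H)))
      = Algebra.TensorProduct.assoc R R R H H H
          (LinearMap.rTensor H (Coalgebra.comul (R := R)) (↑F⁻¹ : H ⊗[R] H))
        * Algebra.TensorProduct.assoc R R R H H H ((↑F⁻¹ : H ⊗[R] H) ⊗ₜ[R] (1 : H)) := by
    rw [hΦdef]
    exact cancel_aux _ _ _ _ _ hD hC
  have L1 : star (star x y) z
      = mul3 (act3 (Algebra.TensorProduct.assoc R R R H H H
            (LinearMap.rTensor H (Coalgebra.comul (R := R)) (↑F⁻¹ : H ⊗[R] H))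
          * Algebra.TensorProduct.assoc R R R H H H ((↑F⁻¹ : H ⊗[R] H) ⊗ₜ[R] (1 : H)))
          (x ⊗ₜ[R] (y ⊗ₜ[R] z))) := by
    show LinearMap.mul' R X (act2 (↑F⁻¹ : H ⊗[R] H)
        ((LinearMap.mul' R X (act2 (↑F⁻¹ : H ⊗[R] H) (x ⊗ₜ[R] y))) ⊗ₜ[R] z)) = _
    rw [covL, covAssoc, act3_mul]
    rfl
  have R1 : star x (star y z)
      = mul3 (act3 (LinearMap.lTensor H (Coalgebra.comul (R := R)) (↑F⁻¹ : H ⊗[R] H)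
          * ((1 : H) ⊗ₜ[R] (↑F⁻¹ : H ⊗[R] H))) (x ⊗ₜ[R] (y ⊗ₜ[R] z))) := by
    show LinearMap.mul' R X (act2 (↑F⁻¹ : H ⊗[R] H)
        (x ⊗ₜ[R] LinearMap.mul' R X (act2 (↑F⁻¹ : H ⊗[R] H) (y ⊗ₜ[R] z)))) = _
    rw [covR, covRight, act3_mul]
    rfl
  rw [L1, R1, ← hfactor, act3_mul, Module.End.mul_apply]
  exact hΦ' _
end
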